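/- Let H be a connected m-uniform linear hypergraph (m ≥ 3), let e be a non-pendant edge of H, and let u ∈ e. Let e_1,...,e_s be all edges of H adjacent to e, with e ∩ e_i = {v_i} for each i, and let H^r(e;u) be the hypergraph obtained from H by replacing each e_i by (e_i \ {v_i}) ∪ {u} (edge releasing on e at u); assume H^r(e;u) is again a simple m-uniform linear hypergraph. Then λ1(H^r(e;u)) > λ1(H). -/

import Mathlib

noncomputable section

open scoped Classical

/-- A finite hypergraph: a bundled finite vertex type together with a finite
set of edges, each edge being a finite set of vertices. -/
structure HG where
  V : Type
  fin : Fintype V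
  dec : DecidableEq V
  E : Finset (Finset V)

attribute [instance] HG.fin HG.dec

namespace HG

/-- Adjacency matrix of an `m`-uniform hypergraph: entry `1/(m-1)` if the two
vertices are distinct and lie in a common edge, `0` otherwise. -/
def adjMatrix (m : ℕ) (H : HG) : Matrix H.V H.V ℝ := fun i j =>
  if i ≠ j ∧ ∃ e ∈ H.E, i ∈ e ∧ j ∈ e then ((m : ℝ) - 1)⁻¹ else 0

/-- The spectral radius `λ₁(H)`: the largest (real) eigenvalue of the adjacency matrix. -/
def lam1 (m : ℕ) (H : HG) : ℝ :=
  sSup {t : ℝ | ∃ x : H.V → ℝ, x ≠ 0 ∧ (H.adjMatrix m).mulVec x = t • x}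

/-- `H` is `m`-uniform: every edge has exactly `m` vertices. -/
def Uniform (H : HG) (m : ℕ) : Prop := ∀ e ∈ H.E, e.card = m

/-- `H` is linear: two distinct edges meet in at most one vertex. -/
def Linear (H : HG) : Prop := ∀ e ∈ H.E, ∀ f ∈ H.E, e ≠ f → (e ∩ f).card ≤ 1

/-- The underlying (adjacency) simple graph of a hypergraph. -/
def toGraph (H : HG) : SimpleGraph H.V where
  Adj i j := i ≠ j ∧ ∃ e ∈ H.E, i ∈ e ∧ j ∈ e
  symm := by refine ⟨?_⟩; rintro i j ⟨hne, e, he, hi, hj⟩; exact ⟨hne.symm, e, he, hj, hi⟩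
  loopless := by refine ⟨?_⟩; rintro i ⟨hne, -⟩; exact hne rfl

/-- Connectedness of a hypergraph. -/
def Connected (H : HG) : Prop := H.toGraph.Connected

/-- Diameter: maximum distance between two vertices. -/
def diam (H : HG) : ℕ :=
  Finset.univ.sup fun u => Finset.univ.sup fun v => H.toGraph.dist u v

/-- Degree of a vertex: the number of edges containing it. -/
def degree (H : HG) (v : H.V) : ℕ := (H.E.filter fun e => v ∈ e).card

/-- A vertex is pendant if it lies in exactly one edge. -/
def PendantVertex (H : HG) (v : H.V) : Prop := H.degree v = 1

/-- An edge is pendant if it contains exactly one non-pendant vertex. -/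
def PendantEdge (H : HG) (e : Finset H.V) : Prop :=
  e ∈ H.E ∧ (e.filter fun v => ¬ H.PendantVertex v).card = 1

/-- A supertree: connected `m`-uniform linear hypergraph with `n - 1 = k (m-1)`. -/
def IsSupertree (m : ℕ) (H : HG) : Prop :=
  H.Uniform m ∧ H.Linear ∧ H.Connected ∧
    Fintype.card H.V = H.E.card * (m - 1) + 1

/-- A hypertree: a supertree each of whose edges has at most two non-pendant vertices. -/
def IsHypertree (m : ℕ) (H : HG) : Prop :=
  H.IsSupertree m ∧ ∀ e ∈ H.E, (e.filter fun v => ¬ H.PendantVertex v).card ≤ 2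

/-- Isomorphism of hypergraphs. -/
def Iso (H K : HG) : Prop :=
  ∃ f : H.V ≃ K.V, ∀ e : Finset H.V, e ∈ H.E ↔ e.image f ∈ K.E

/-- `X` is a Perron eigenvector of `H`: positive and an eigenvector for `λ₁`. -/
def IsPerron (m : ℕ) (H : HG) (X : H.V → ℝ) : Prop :=
  (∀ v, 0 < X v) ∧ (H.adjMatrix m).mulVec X = lam1 m H • X

/-- Cyclic successor on `Fin l`. -/
def cycNext (l : ℕ) (j : Fin l) : Fin l :=
  ⟨(j.val + 1) % l, Nat.mod_lt _ (lt_of_le_of_lt (Nat.zero_le _) j.isLt)⟩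

/-- `e : Fin l → Finset H.V` is a loose cycle of length `l` in `H`:
consecutive edges meet in exactly one vertex, non-consecutive edges are disjoint. -/
def IsLooseCycle (H : HG) (l : ℕ) (e : Fin l → Finset H.V) : Prop :=
  3 ≤ l ∧ (∀ i, e i ∈ H.E) ∧ Function.Injective e ∧
    ∀ i j : Fin l, i ≠ j →
      ((j = cycNext l i ∨ i = cycNext l j) → (e i ∩ e j).card = 1) ∧
      (¬(j = cycNext l i ∨ i = cycNext l j) → e i ∩ e j = ∅)

/-- The collection of (edge sets of) loose cycles contained in `H`. -/
def cycleSets (H : HG) : Set (Finset (Finset H.V)) :=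
  {C | ∃ (l : ℕ) (e : Fin l → Finset H.V), H.IsLooseCycle l e ∧ C = Finset.univ.image e}

/-- The `m`-th power hypergraph of the graph with vertex type `Vg` and edges
`{a i, b i}` for `i : Eg`: each edge is enlarged with `m - 2` new vertices. -/
def powerHG (m : ℕ) (Vg Eg : Type) [Fintype Vg] [DecidableEq Vg] [Fintype Eg] [DecidableEq Eg]
    (a b : Eg → Vg) : HG where
  V := Vg ⊕ Eg × Fin (m - 2)
  fin := inferInstance
  dec := inferInstance
  E := Finset.univ.image fun i : Eg =>
    ({Sum.inl (a i), Sum.inl (b i)} : Finset (Vg ⊕ Eg × Fin (m - 2))) ∪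
      Finset.univ.image fun t : Fin (m - 2) => Sum.inr (i, t)

/-- `H` is (isomorphic to) the `m`-th power hypergraph of some simple graph. -/
def IsPowerHG (m : ℕ) (H : HG) : Prop :=
  ∃ (N k : ℕ) (a b : Fin k → Fin N),
    (∀ i, a i ≠ b i) ∧
    (Function.Injective fun i => ({a i, b i} : Finset (Fin N))) ∧
    H.Iso (powerHG m (Fin N) (Fin k) a b)

/-- The `m`-uniform loose path of length `l`. -/
def loosePath (m l : ℕ) : HG :=
  powerHG m (Fin (l + 1)) (Fin l) (fun j => j.castSucc) (fun j => j.succ)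

/-- The `m`-uniform hyperstar with `k` edges. -/
def hyperstar (m k : ℕ) : HG :=
  powerHG m (Fin (k + 1)) (Fin k) (fun _ => 0) (fun i => i.succ)

/-- `T_d(c₂,…,c_d)`: the hypertree obtained from the loose path
`v₁ e₁ v₂ … v_d e_d v_{d+1}` by attaching `c i` pendant edges at `v_i`
(the path vertex of 0-based index `j` is `v_{j+1}`). -/
def Td (m d : ℕ) (c : ℕ → ℕ) : HG :=
  powerHG m
    (Fin (d + 1) ⊕ Σ j : Fin (d + 1), Fin (c (j.val + 1)))
    (Fin d ⊕ Σ j : Fin (d + 1), Fin (c (j.val + 1)))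
    (Sum.elim (fun j => Sum.inl j.castSucc) fun x => Sum.inl x.1)
    (Sum.elim (fun j => Sum.inl j.succ) fun x => Sum.inr x)

/-- `UC_l(c₁,…,c_l)`: the unicyclic hypergraph obtained from the loose cycle
`v₁ e₁ v₂ … v_l e_l v₁` by attaching `c i` pendant edges at `v_i`
(the cycle vertex of 0-based index `j` is `v_{j+1}`). -/
def UCl (m l : ℕ) (c : ℕ → ℕ) : HG :=
  powerHG m
    (Fin l ⊕ Σ j : Fin l, Fin (c (j.val + 1)))
    (Fin l ⊕ Σ j : Fin l, Fin (c (j.val + 1)))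
    (Sum.elim (fun j => Sum.inl j) fun x => Sum.inl x.1)
    (Sum.elim (fun j => Sum.inl (cycNext l j)) fun x => Sum.inr x)

/-- `U_lC(c₁ = a)`: obtained from `UC_l(c₁ = a)` by attaching one further pendant
edge at a pendant vertex of one of its `a` pendant edges. -/
def UlC (m l a : ℕ) : HG :=
  match l, a with
  | l' + 1, a' + 1 =>
    powerHG m (Fin (l' + 1) ⊕ Fin (a' + 1) ⊕ Unit) (Fin (l' + 1) ⊕ Fin (a' + 1) ⊕ Unit)
      (Sum.elim (fun j => Sum.inl j)
        (Sum.elim (fun _ => Sum.inl 0) fun _ => Sum.inr (Sum.inl 0)))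
      (Sum.elim (fun j => Sum.inl (cycNext (l' + 1) j))
        (Sum.elim (fun t => Sum.inr (Sum.inl t)) fun _ => Sum.inr (Sum.inr ())))
  | _, _ => ⟨PUnit, inferInstance, inferInstance, ∅⟩

/-- `BC(l₁)`: two loose 3-cycles glued at one common core vertex, with `l₁`
pendant edges attached at the identified core vertex. -/
def BC (m l1 : ℕ) : HG :=
  powerHG m (Unit ⊕ Fin 4 ⊕ Fin l1) (Fin 6 ⊕ Fin l1)
    (Sum.elim
      ![Sum.inl (), Sum.inr (Sum.inl 0), Sum.inr (Sum.inl 1),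
        Sum.inl (), Sum.inr (Sum.inl 2), Sum.inr (Sum.inl 3)]
      fun _ => Sum.inl ())
    (Sum.elim
      ![Sum.inr (Sum.inl 0), Sum.inr (Sum.inl 1), Sum.inl (),
        Sum.inr (Sum.inl 2), Sum.inr (Sum.inl 3), Sum.inl ()]
      fun t => Sum.inr (Sum.inr t))

/-- `B₂C(l₁,l₂)`: obtained from `BC(l₁)` by attaching `l₂` pendant edges at a
core vertex of degree 2 of one of its 3-cycles. -/
def B2C (m l1 l2 : ℕ) : HG :=
  powerHG m (Unit ⊕ Fin 4 ⊕ Fin l1 ⊕ Fin l2) (Fin 6 ⊕ Fin l1 ⊕ Fin l2)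
    (Sum.elim
      ![Sum.inl (), Sum.inr (Sum.inl 0), Sum.inr (Sum.inl 1),
        Sum.inl (), Sum.inr (Sum.inl 2), Sum.inr (Sum.inl 3)]
      (Sum.elim (fun _ => Sum.inl ()) fun _ => Sum.inr (Sum.inl 0)))
    (Sum.elim
      ![Sum.inr (Sum.inl 0), Sum.inr (Sum.inl 1), Sum.inl (),
        Sum.inr (Sum.inl 2), Sum.inr (Sum.inl 3), Sum.inl ()]
      (Sum.elim (fun t => Sum.inr (Sum.inr (Sum.inl t)))
        fun t => Sum.inr (Sum.inr (Sum.inr t))))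

/-- `T₁C(l₁,l₂,l₃,l₄)`: the tricyclic Type I hypergraph built on the theta graph
with cycles `v₁e₁v₂e₂v₃e₃v₁`, `v₁e₃v₃e₄v₄e₅v₁`, `v₁e₁v₂e₂v₃e₄v₄e₅v₁`
(here 0-based: `v₁ = 0, v₂ = 1, v₃ = 2, v₄ = 3`), together with `lᵢ` pendant
edges at `vᵢ`. -/
def T1C (m l1 l2 l3 l4 : ℕ) : HG :=
  powerHG m
    (Fin 4 ⊕ (Fin l1 ⊕ Fin l2 ⊕ Fin l3 ⊕ Fin l4))
    (Fin 5 ⊕ (Fin l1 ⊕ Fin l2 ⊕ Fin l3 ⊕ Fin l4))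
    (Sum.elim
      ![Sum.inl 0, Sum.inl 1, Sum.inl 2, Sum.inl 2, Sum.inl 3]
      (Sum.elim (fun _ => Sum.inl 0)
        (Sum.elim (fun _ => Sum.inl 1)
          (Sum.elim (fun _ => Sum.inl 2) fun _ => Sum.inl 3))))
    (Sum.elim
      ![Sum.inl 1, Sum.inl 2, Sum.inl 0, Sum.inl 3, Sum.inl 0]
      (Sum.elim (fun t => Sum.inr (Sum.inl t))
        (Sum.elim (fun t => Sum.inr (Sum.inr (Sum.inl t)))
          (Sum.elim (fun t => Sum.inr (Sum.inr (Sum.inr (Sum.inl t))))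
            fun t => Sum.inr (Sum.inr (Sum.inr (Sum.inr t)))))))

end HG

/-!
Let `X` be the Perron vector of `H`, `w` a vertex of `e` where `X` is largest on `e`, and
`Y = X ∘ (u w)`. For a linear hypergraph `xᵀ A x = (m-1)⁻¹ ∑_g ∑_{i ≠ j ∈ g} x_i x_j`. The edge `e`
and the edges missing `e` contribute equally to `Xᵀ A(H) X` and `Yᵀ A(H^r) Y`, while an edge `f`
meeting `e` in `v` contributes `2 X_v ∑_{f \ e} X` to the first and `2 X_w ∑_{f \ e} X` to the
second. So `λ₁(H) ≤ λ₁(H^r)` by the Rayleigh principle, and equality makes `Y` an eigenvector of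
`H^r`. In `H^r` the vertices of `e` other than `u` lie in `e` only, so comparing the eigenvalue
equations of `Y` there with those of `X` in `H` shows that every vertex of `e` other than `w` is
pendant in `H`, contradicting that `e` is not pendant.
-/

namespace Matrix

variable {n : Type} [Fintype n]

def maxEigenvalue (A : Matrix n n ℝ) : ℝ :=
  sSup {t : ℝ | ∃ x : n → ℝ, x ≠ 0 ∧ A *ᵥ x = t • x}

theorem pos_of_mulVec_eq_smul {A : Matrix n n ℝ} (hnn : ∀ i j, 0 ≤ A i j) {G : SimpleGraph n}
    (hG : G.Connected) (hpos : ∀ i j, G.Adj i j → 0 < A i j) {y : n → ℝ} {μ : ℝ}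
    (hy0 : ∀ i, 0 ≤ y i) (hy : y ≠ 0) (heig : A *ᵥ y = μ • y) (i : n) : 0 < y i := by
  have hzero_adj : ∀ j k, G.Adj j k → y j = 0 → y k = 0 := by
    intro j k hjk hj
    have hrow : ∑ l, A j l * y l = 0 := by
      simpa [mulVec, dotProduct, hj] using congrFun heig j
    have := (Finset.sum_eq_zero_iff_of_nonneg fun l _ => mul_nonneg (hnn j l) (hy0 l)).1 hrow k
      (Finset.mem_univ k)
    exact (mul_eq_zero.1 this).resolve_left (hpos j k hjk).ne'
  refine (hy0 i).lt_of_ne fun hi => hy (funext fun j => ?_)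
  obtain ⟨p⟩ := hG.preconnected i j
  induction p with
  | nil => exact hi.symm
  | cons hadj _ ih => exact ih (hzero_adj _ _ hadj hi.symm).symm

variable [DecidableEq n]

namespace PosSemidef

variable {A : Matrix n n ℝ} {μ : ℝ}

theorem dotProduct_mulVec_le_mul_dotProduct (hμ : (algebraMap ℝ _ μ - A).PosSemidef)
    (x : n → ℝ) : x ⬝ᵥ A *ᵥ x ≤ μ * (x ⬝ᵥ x) := by
  have := hμ.dotProduct_mulVec_nonneg x
  simp only [star_trivial, Algebra.algebraMap_eq_smul_one, sub_mulVec, smul_mulVec, one_mulVec,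
    dotProduct_sub, dotProduct_smul, smul_eq_mul] at this
  linarith

theorem mulVec_eq_smul_of_dotProduct_mulVec_eq (hμ : (algebraMap ℝ _ μ - A).PosSemidef)
    {x : n → ℝ} (hx : x ⬝ᵥ A *ᵥ x = μ * (x ⬝ᵥ x)) : A *ᵥ x = μ • x := by
  have := (hμ.dotProduct_mulVec_zero_iff x).1 (by
    simp only [star_trivial, Algebra.algebraMap_eq_smul_one, sub_mulVec, smul_mulVec, one_mulVec,
      dotProduct_sub, dotProduct_smul, smul_eq_mul, hx, sub_self])
  simp only [Algebra.algebraMap_eq_smul_one, sub_mulVec, smul_mulVec, one_mulVec] at this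
  exact (sub_eq_zero.1 this).symm

end PosSemidef

namespace IsHermitian

variable [Nonempty n] {A : Matrix n n ℝ}

theorem posSemidef_sup'_eigenvalues_sub (hA : A.IsHermitian) :
    (algebraMap ℝ _ (Finset.univ.sup' Finset.univ_nonempty hA.eigenvalues) - A).PosSemidef := by
  refine posSemidef_iff_isHermitian_and_spectrum_nonneg.2 ⟨(isHermitian_diagonal _).sub hA, ?_⟩
  rw [← spectrum.singleton_sub_eq, hA.spectrum_real_eq_range_eigenvalues]
  rintro _ ⟨_, rfl, _, ⟨i, rfl⟩, rfl⟩
  exact sub_nonneg.2 (Finset.le_sup' hA.eigenvalues (Finset.mem_univ i))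

theorem maxEigenvalue_eq_sup'_eigenvalues (hA : A.IsHermitian) :
    A.maxEigenvalue = Finset.univ.sup' Finset.univ_nonempty hA.eigenvalues := by
  obtain ⟨i, -, hi⟩ := Finset.exists_mem_eq_sup' Finset.univ_nonempty hA.eigenvalues
  refine IsGreatest.csSup_eq ⟨⟨WithLp.equiv 2 _ (hA.eigenvectorBasis i), ?_,
    hi ▸ hA.mulVec_eigenvectorBasis i⟩, ?_⟩
  · simpa using hA.eigenvectorBasis.orthonormal.ne_zero i
  rintro t ⟨x, hx, hxt⟩
  have := hA.posSemidef_sup'_eigenvalues_sub.dotProduct_mulVec_le_mul_dotProduct x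
  rw [hxt, dotProduct_smul, smul_eq_mul] at this
  exact le_of_mul_le_mul_right this (dotProduct_self_star_pos_iff.2 hx)

theorem posSemidef_maxEigenvalue_sub (hA : A.IsHermitian) :
    (algebraMap ℝ _ A.maxEigenvalue - A).PosSemidef :=
  hA.maxEigenvalue_eq_sup'_eigenvalues ▸ hA.posSemidef_sup'_eigenvalues_sub

theorem exists_mulVec_eq_maxEigenvalue_smul (hA : A.IsHermitian) :
    ∃ x : n → ℝ, x ≠ 0 ∧ A *ᵥ x = A.maxEigenvalue • x := by
  obtain ⟨i, -, hi⟩ := Finset.exists_mem_eq_sup' Finset.univ_nonempty hA.eigenvalues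
  refine ⟨WithLp.equiv 2 _ (hA.eigenvectorBasis i), ?_, ?_⟩
  · simpa using hA.eigenvectorBasis.orthonormal.ne_zero i
  · rw [hA.maxEigenvalue_eq_sup'_eigenvalues, hi]
    exact hA.mulVec_eigenvectorBasis i

theorem le_maxEigenvalue_of_dotProduct_mulVec_le {A B : Matrix n n ℝ} (hB : B.IsHermitian)
    {x y : n → ℝ} {μ : ℝ} (hx : A *ᵥ x = μ • x) (hx0 : x ≠ 0)
    (h : x ⬝ᵥ A *ᵥ x ≤ y ⬝ᵥ B *ᵥ y) (hyx : y ⬝ᵥ y = x ⬝ᵥ x) : μ ≤ B.maxEigenvalue := by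
  have := hB.posSemidef_maxEigenvalue_sub.dotProduct_mulVec_le_mul_dotProduct y
  rw [hx, dotProduct_smul, smul_eq_mul] at h
  rw [hyx] at this
  exact le_of_mul_le_mul_right (h.trans this) (dotProduct_self_star_pos_iff.2 hx0)

theorem mulVec_eq_smul_of_dotProduct_mulVec_le {A B : Matrix n n ℝ} (hB : B.IsHermitian)
    {x y : n → ℝ} {μ : ℝ} (hx : A *ᵥ x = μ • x) (h : x ⬝ᵥ A *ᵥ x ≤ y ⬝ᵥ B *ᵥ y)
    (hyx : y ⬝ᵥ y = x ⬝ᵥ x) (hμ : B.maxEigenvalue = μ) : B *ᵥ y = μ • y := by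
  have hPSD := hB.posSemidef_maxEigenvalue_sub
  rw [hμ] at hPSD
  refine hPSD.mulVec_eq_smul_of_dotProduct_mulVec_eq (le_antisymm
    (hPSD.dotProduct_mulVec_le_mul_dotProduct y) ?_)
  rwa [hyx, ← smul_eq_mul, ← dotProduct_smul, ← hx]

end IsHermitian

theorem IsHermitian.exists_pos_mulVec_eq_maxEigenvalue_smul {A : Matrix n n ℝ}
    (hA : A.IsHermitian) (hnn : ∀ i j, 0 ≤ A i j) {G : SimpleGraph n} (hG : G.Connected)
    (hpos : ∀ i j, G.Adj i j → 0 < A i j) :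
    ∃ x : n → ℝ, (∀ i, 0 < x i) ∧ A *ᵥ x = A.maxEigenvalue • x := by
  have := hG.nonempty
  obtain ⟨x, hx0, hx⟩ := hA.exists_mulVec_eq_maxEigenvalue_smul
  have habs : x ⬝ᵥ A *ᵥ x ≤ (|x|) ⬝ᵥ A *ᵥ |x| := by
    simp only [dotProduct, mulVec, Finset.mul_sum]
    refine Finset.sum_le_sum fun i _ => Finset.sum_le_sum fun j _ => ?_
    calc x i * (A i j * x j) ≤ |x i * (A i j * x j)| := le_abs_self _
      _ = |x| i * (A i j * |x| j) := by simp [abs_mul, abs_of_nonneg (hnn i j)]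
  have hnorm : |x| ⬝ᵥ |x| = x ⬝ᵥ x := by simp [dotProduct, abs_mul_abs_self]
  have heig := hA.mulVec_eq_smul_of_dotProduct_mulVec_le hx habs hnorm rfl
  exact ⟨|x|, pos_of_mulVec_eq_smul hnn hG hpos (fun i => abs_nonneg (x i))
    (by simpa [funext_iff] using hx0) heig, heig⟩

end Matrix

namespace Finset

variable {V : Type*}

def offDiagSum (s : Finset V) (x : V → ℝ) : ℝ := ∑ p ∈ s.offDiag, x p.1 * x p.2

variable {s : Finset V} {x : V → ℝ}

theorem offDiagSum_congr {y : V → ℝ} (h : ∀ i ∈ s, x i = y i) :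
    s.offDiagSum x = s.offDiagSum y :=
  sum_congr rfl fun p hp => by
    rw [h p.1 (mem_offDiag.1 hp).1, h p.2 (mem_offDiag.1 hp).2.1]

variable [DecidableEq V]

theorem offDiagSum_eq (s : Finset V) (x : V → ℝ) :
    s.offDiagSum x = (∑ i ∈ s, x i) ^ 2 - ∑ i ∈ s, x i ^ 2 := by
  rw [sq, sum_mul_sum, ← sum_product', ← diag_union_offDiag, sum_union (disjoint_diag_offDiag s),
    sum_diag, offDiagSum]
  simp only [sq, add_sub_cancel_left]

theorem offDiagSum_insert {a : V} (ha : a ∉ s) :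
    (insert a s).offDiagSum x = 2 * x a * ∑ i ∈ s, x i + s.offDiagSum x := by
  rw [offDiagSum_eq, offDiagSum_eq, sum_insert ha, sum_insert ha]
  ring

theorem offDiagSum_comp_perm {σ : Equiv.Perm V} (hσ : {a | σ a ≠ a} ⊆ s) :
    s.offDiagSum (x ∘ σ) = s.offDiagSum x := by
  simp only [offDiagSum_eq, Function.comp_apply, σ.sum_comp s x hσ,
    σ.sum_comp s (fun i => x i ^ 2) hσ]

end Finset

theorem Finset.sum_sdiff_union_image_of_card_eq {α M : Type*} [DecidableEq α] [AddCommMonoid M]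
    {s t : Finset α} (hts : t ⊆ s) {r : α → α} (hcard : (s \ t ∪ t.image r).card = s.card)
    (F : α → M) : ∑ a ∈ s \ t ∪ t.image r, F a = ∑ a ∈ s \ t, F a + ∑ a ∈ t, F (r a) := by
  have hunion := card_union_le (s \ t) (t.image r)
  have himage := card_image_le (s := t) (f := r)
  have hsdiff := card_sdiff_of_subset hts
  have hle := card_le_card hts
  rw [sum_union (card_union_eq_card_add_card.1 (by omega)),
    sum_image (card_image_iff.1 (by omega))]

theorem Equiv.swap_apply_of_notMem {V : Type*} [DecidableEq V] {s : Finset V} {u w : V}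
    (hu : u ∈ s) (hw : w ∈ s) {a : V} (ha : a ∉ s) : Equiv.swap u w a = a :=
  Equiv.swap_apply_of_ne_of_ne (fun h => ha (h ▸ hu)) fun h => ha (h ▸ hw)

theorem Equiv.setOf_swap_apply_ne_subset {V : Type*} [DecidableEq V] {s : Finset V} {u w : V}
    (hu : u ∈ s) (hw : w ∈ s) : {a | Equiv.swap u w a ≠ a} ⊆ s := fun _ ha =>
  by_contra fun has => ha (Equiv.swap_apply_of_notMem hu hw has)

namespace HG

open Matrix

variable (m : ℕ) (H : HG)

theorem adjMatrix_apply (i j : H.V) :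
    H.adjMatrix m i j = if H.toGraph.Adj i j then ((m : ℝ) - 1)⁻¹ else 0 :=
  if_congr Iff.rfl rfl rfl

theorem isHermitian_adjMatrix : (H.adjMatrix m).IsHermitian := by
  ext i j
  simp [adjMatrix_apply, H.toGraph.adj_comm]

variable {m H}

theorem adjMatrix_nonneg (hm : 1 ≤ m) (i j : H.V) : 0 ≤ H.adjMatrix m i j := by
  have : (1 : ℝ) ≤ m := by exact_mod_cast hm
  rw [adjMatrix_apply]
  split_ifs <;> simp [this]

theorem adjMatrix_mulVec_apply (x : H.V → ℝ) (i : H.V) :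
    (H.adjMatrix m *ᵥ x) i = ((m : ℝ) - 1)⁻¹ * ∑ j with H.toGraph.Adj i j, x j := by
  simp [mulVec, dotProduct, adjMatrix_apply, Finset.sum_filter, Finset.mul_sum]

theorem Linear.pairwiseDisjoint_offDiag (hlin : H.Linear) :
    (H.E : Set (Finset H.V)).PairwiseDisjoint Finset.offDiag := by
  intro g hg g' hg' hne
  refine Finset.disjoint_left.2 fun p hp hp' => ?_
  rw [Finset.mem_offDiag] at hp hp'
  have := hlin g hg g' hg' hne
  exact this.not_gt (Finset.one_lt_card.2 ⟨p.1, Finset.mem_inter.2 ⟨hp.1, hp'.1⟩,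
    p.2, Finset.mem_inter.2 ⟨hp.2.1, hp'.2.1⟩, hp.2.2⟩)

theorem dotProduct_adjMatrix_mulVec (hlin : H.Linear) (x : H.V → ℝ) :
    x ⬝ᵥ H.adjMatrix m *ᵥ x = ((m : ℝ) - 1)⁻¹ * ∑ g ∈ H.E, g.offDiagSum x := by
  -- Linearity makes every ordered pair of adjacent vertices lie in exactly one edge.
  have hpairs :
      H.E.biUnion Finset.offDiag = ({p : H.V × H.V | H.toGraph.Adj p.1 p.2} : Finset _) := by
    ext p
    simp only [Finset.mem_biUnion, Finset.mem_offDiag, toGraph]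
    grind
  calc x ⬝ᵥ H.adjMatrix m *ᵥ x
      = ((m : ℝ) - 1)⁻¹ * ∑ p : H.V × H.V with H.toGraph.Adj p.1 p.2, x p.1 * x p.2 := by
        simp only [dotProduct, adjMatrix_mulVec_apply, Finset.mul_sum, Finset.sum_filter,
          ← Finset.univ_product_univ, Finset.sum_product]
        simp only [mul_ite, mul_zero, mul_left_comm]
    _ = ((m : ℝ) - 1)⁻¹ * ∑ g ∈ H.E, g.offDiagSum x := by
        rw [← hpairs, Finset.sum_biUnion hlin.pairwiseDisjoint_offDiag]
        rfl

theorem exists_isPerron (hm : 1 < m) (hconn : H.Connected) : ∃ X, H.IsPerron m X := by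
  have hc : (0 : ℝ) < ((m : ℝ) - 1)⁻¹ := by
    have : (1 : ℝ) < m := by exact_mod_cast hm
    simpa using this
  exact (isHermitian_adjMatrix m H).exists_pos_mulVec_eq_maxEigenvalue_smul
    (adjMatrix_nonneg hm.le) hconn fun i j hij => by rwa [adjMatrix_apply, if_pos hij]

theorem pendantVertex_of_forall_adj_mem (hunif : H.Uniform m) {e : Finset H.V} (he : e ∈ H.E)
    {p : H.V} (hp : p ∈ e) (hadj : ∀ j, H.toGraph.Adj p j → j ∈ e) : H.PendantVertex p := by
  refine Finset.card_eq_one.2 ⟨e, Finset.eq_singleton_iff_unique_mem.2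
    ⟨Finset.mem_filter.2 ⟨he, hp⟩, fun g hg => ?_⟩⟩
  rw [Finset.mem_filter] at hg
  have hge : g ⊆ e := fun j hj => by
    by_cases hjp : j = p
    · exact hjp ▸ hp
    · exact hadj j ⟨Ne.symm hjp, g, hg.1, hg.2, hj⟩
  exact Finset.eq_of_subset_of_card_le hge (by rw [hunif g hg.1, hunif e he])

end HG

namespace HG

open Matrix

variable {m : ℕ} {H : HG} {e : Finset H.V} {u w : H.V}

def adjacentEdges (H : HG) (e : Finset H.V) : Finset (Finset H.V) :=
  H.E.filter fun f => f ≠ e ∧ (f ∩ e).Nonempty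

abbrev release (H : HG) (e : Finset H.V) (u : H.V) : HG :=
  ⟨H.V, H.fin, H.dec,
    (H.E \ H.adjacentEdges e) ∪ (H.adjacentEdges e).image fun f => insert u (f \ e)⟩

theorem adjacentEdges_subset : H.adjacentEdges e ⊆ H.E := by
  unfold adjacentEdges
  exact Finset.filter_subset _ _

theorem exists_eq_insert_sdiff_of_mem_adjacentEdges (hlin : H.Linear) (he : e ∈ H.E)
    {f : Finset H.V} (hf : f ∈ H.adjacentEdges e) : ∃ v ∈ e, f = insert v (f \ e) := by
  obtain ⟨hfE, hfe, hne⟩ := Finset.mem_filter.1 hf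
  obtain ⟨v, hv⟩ := Finset.card_eq_one.1
    (le_antisymm (hlin f hfE e he hfe) (Finset.card_pos.2 hne))
  refine ⟨v, (Finset.mem_inter.1 (hv ▸ Finset.mem_singleton_self v)).2, ?_⟩
  rw [Finset.insert_eq, ← hv, Finset.union_comm, Finset.sdiff_union_inter]

theorem eq_or_disjoint_of_mem_sdiff_adjacentEdges {g : Finset H.V}
    (hg : g ∈ H.E \ H.adjacentEdges e) : g = e ∨ Disjoint g e := by
  rw [Finset.mem_sdiff, adjacentEdges, Finset.mem_filter] at hg
  by_contra! h
  exact hg.2 ⟨hg.1, h.1, Finset.not_disjoint_iff_nonempty_inter.1 h.2⟩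

theorem mem_release_self (he : e ∈ H.E) : e ∈ (H.release e u).E :=
  Finset.mem_union_left _ (Finset.mem_sdiff.2 ⟨he, fun h => (Finset.mem_filter.1 h).2.1 rfl⟩)

theorem eq_of_mem_release_of_mem {g : Finset H.V} (hg : g ∈ (H.release e u).E) {q : H.V}
    (hqg : q ∈ g) (hqe : q ∈ e) (hqu : q ≠ u) : g = e := by
  rcases Finset.mem_union.1 hg with hg | hg
  · exact (eq_or_disjoint_of_mem_sdiff_adjacentEdges hg).resolve_right
      (Finset.not_disjoint_iff.2 ⟨q, hqg, hqe⟩)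
  · obtain ⟨f, -, rfl⟩ := Finset.mem_image.1 hg
    rcases Finset.mem_insert.1 hqg with h | h
    · exact absurd h hqu
    · exact absurd hqe (Finset.mem_sdiff.1 h).2

theorem release_toGraph_adj_iff (he : e ∈ H.E) {q j : H.V} (hqe : q ∈ e) (hqu : q ≠ u) :
    (H.release e u).toGraph.Adj q j ↔ j ∈ e.erase q := by
  refine ⟨fun ⟨hqj, g, hg, hqg, hjg⟩ => ?_, fun hj => ?_⟩
  · exact Finset.mem_erase.2 ⟨Ne.symm hqj, eq_of_mem_release_of_mem hg hqg hqe hqu ▸ hjg⟩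
  · obtain ⟨hjq, hje⟩ := Finset.mem_erase.1 hj
    exact ⟨Ne.symm hjq, e, mem_release_self he, hqe, hje⟩

theorem release_adjMatrix_mulVec_apply (he : e ∈ H.E) {q : H.V} (hqe : q ∈ e) (hqu : q ≠ u)
    (y : H.V → ℝ) :
    ((H.release e u).adjMatrix m *ᵥ y) q = ((m : ℝ) - 1)⁻¹ * ∑ j ∈ e.erase q, y j := by
  rw [adjMatrix_mulVec_apply]
  congr 2
  ext j
  simpa using release_toGraph_adj_iff he hqe hqu

theorem sum_release (hsimple : (H.release e u).E.card = H.E.card) (F : Finset H.V → ℝ) :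
    ∑ g ∈ (H.release e u).E, F g =
      ∑ g ∈ H.E \ H.adjacentEdges e, F g + ∑ f ∈ H.adjacentEdges e, F (insert u (f \ e)) :=
  Finset.sum_sdiff_union_image_of_card_eq adjacentEdges_subset hsimple F

theorem offDiagSum_swap_of_mem_sdiff_adjacentEdges (hu : u ∈ e) (hw : w ∈ e) (X : H.V → ℝ)
    {g : Finset H.V} (hg : g ∈ H.E \ H.adjacentEdges e) :
    g.offDiagSum (X ∘ Equiv.swap u w) = g.offDiagSum X := by
  rcases eq_or_disjoint_of_mem_sdiff_adjacentEdges hg with rfl | hdisj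
  · exact Finset.offDiagSum_comp_perm (Equiv.setOf_swap_apply_ne_subset hu hw)
  · exact Finset.offDiagSum_congr fun i hi =>
      congrArg X (Equiv.swap_apply_of_notMem hu hw (Finset.disjoint_left.1 hdisj hi))

theorem offDiagSum_le_release (hlin : H.Linear) (he : e ∈ H.E) (hu : u ∈ e) (hw : w ∈ e)
    {X : H.V → ℝ} (hX : ∀ i, 0 ≤ X i) (hwmax : ∀ q ∈ e, X q ≤ X w) {f : Finset H.V}
    (hf : f ∈ H.adjacentEdges e) :
    f.offDiagSum X ≤ (insert u (f \ e)).offDiagSum (X ∘ Equiv.swap u w) := by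
  obtain ⟨v, hv, hfv⟩ := exists_eq_insert_sdiff_of_mem_adjacentEdges hlin he hf
  have hfix : ∀ i ∈ f \ e, (X ∘ Equiv.swap u w) i = X i := fun i hi =>
    congrArg X (Equiv.swap_apply_of_notMem hu hw (Finset.mem_sdiff.1 hi).2)
  have hnotin : ∀ {a}, a ∈ e → a ∉ f \ e := fun ha h => (Finset.mem_sdiff.1 h).2 ha
  rw [Finset.offDiagSum_insert (hnotin hu), Finset.sum_congr rfl hfix,
    Finset.offDiagSum_congr hfix]
  conv_lhs => rw [hfv, Finset.offDiagSum_insert (hnotin hv)]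
  simp only [Function.comp_apply, Equiv.swap_apply_left]
  gcongr
  · exact Finset.sum_nonneg fun i _ => hX i
  · exact hwmax v hv

theorem dotProduct_adjMatrix_mulVec_le_release (hm : 1 ≤ m) (hlin : H.Linear)
    (hlin' : (H.release e u).Linear) (hsimple : (H.release e u).E.card = H.E.card)
    (he : e ∈ H.E) (hu : u ∈ e) (hw : w ∈ e) {X : H.V → ℝ} (hX : ∀ i, 0 ≤ X i)
    (hwmax : ∀ q ∈ e, X q ≤ X w) :
    X ⬝ᵥ H.adjMatrix m *ᵥ X ≤
      (X ∘ Equiv.swap u w) ⬝ᵥ (H.release e u).adjMatrix m *ᵥ (X ∘ Equiv.swap u w) := by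
  have hc : (0 : ℝ) ≤ ((m : ℝ) - 1)⁻¹ := by
    have : (1 : ℝ) ≤ m := by exact_mod_cast hm
    simpa using this
  rw [dotProduct_adjMatrix_mulVec hlin, dotProduct_adjMatrix_mulVec hlin', sum_release hsimple,
    ← Finset.sum_sdiff adjacentEdges_subset]
  gcongr with g hg f hf
  · exact (offDiagSum_swap_of_mem_sdiff_adjacentEdges hu hw X hg).ge
  · exact offDiagSum_le_release hlin he hu hw hX hwmax hf

theorem pendantVertex_of_release_mulVec_eq (hm : 1 < m) (hunif : H.Uniform m) (he : e ∈ H.E)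
    (hu : u ∈ e) (hw : w ∈ e) {X : H.V → ℝ} (hX : H.IsPerron m X)
    (hY : (H.release e u).adjMatrix m *ᵥ (X ∘ Equiv.swap u w) =
      H.lam1 m • (X ∘ Equiv.swap u w))
    {p : H.V} (hp : p ∈ e) (hpw : p ≠ w) : H.PendantVertex p := by
  have hc : ((m : ℝ) - 1)⁻¹ ≠ 0 := by
    have : (1 : ℝ) < m := by exact_mod_cast hm
    exact inv_ne_zero (by linarith)
  have hσp : Equiv.swap u w p ∈ e ∧ Equiv.swap u w p ≠ u := by
    by_cases hpu : p = u
    · subst hpu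
      simpa [Equiv.swap_apply_left] using ⟨hw, Ne.symm hpw⟩
    · rw [Equiv.swap_apply_of_ne_of_ne hpu hpw]
      exact ⟨hp, hpu⟩
  have hrowR : H.lam1 m * X p = ((m : ℝ) - 1)⁻¹ * ∑ j ∈ e.erase p, X j := by
    have := congrFun hY (Equiv.swap u w p)
    rw [release_adjMatrix_mulVec_apply he hσp.1 hσp.2, Finset.sum_erase_eq_sub hσp.1] at this
    rw [Finset.sum_erase_eq_sub hp]
    simpa [(Equiv.swap u w).sum_comp e X (Equiv.setOf_swap_apply_ne_subset hu hw)] using this.symm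
  have hrowH : H.lam1 m * X p = ((m : ℝ) - 1)⁻¹ * ∑ j with H.toGraph.Adj p j, X j := by
    rw [← adjMatrix_mulVec_apply, hX.2]
    rfl
  have hsum := mul_left_cancel₀ hc (hrowH.symm.trans hrowR)
  refine pendantVertex_of_forall_adj_mem hunif he hp fun j hj => by_contra fun hje => ?_
  have hsub : e.erase p ⊆ ({j | H.toGraph.Adj p j} : Finset H.V) := fun k hk =>
    Finset.mem_filter.2 ⟨Finset.mem_univ k, (Finset.mem_erase.1 hk).1.symm, e, he, hp,
      (Finset.mem_erase.1 hk).2⟩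
  exact (Finset.sum_lt_sum_of_subset hsub (Finset.mem_filter.2 ⟨Finset.mem_univ j, hj⟩)
    (fun h => hje (Finset.mem_erase.1 h).2) (hX.1 j) fun k _ _ => (hX.1 k).le).ne' hsum

end HG

open HG in
/-- By linearity each edge `f` adjacent to `e` meets `e` in a single vertex `v_i`, so
`(f \ {v_i}) ∪ {u} = (f \ e) ∪ {u}`. -/
theorem edge_releasing_increases_spectral_radius_general
    (m : ℕ) (hm : 3 ≤ m)
    (H : HG) (hunif : H.Uniform m) (hlin : H.Linear) (hconn : H.Connected)
    (e : Finset H.V) (he : e ∈ H.E)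
    (hnonpend : 2 ≤ (e.filter fun v => ¬ H.PendantVertex v).card)
    (u : H.V) (hu : u ∈ e)
    (Hr : HG)
    (hHr : Hr = ⟨H.V, H.fin, H.dec,
      (H.E \ H.E.filter fun f => f ≠ e ∧ (f ∩ e).Nonempty) ∪
        (H.E.filter fun f => f ≠ e ∧ (f ∩ e).Nonempty).image
          fun f => insert u (f \ e)⟩)
    (hlin' : Hr.Linear)
    (hsimple : Hr.E.card = H.E.card) :
    lam1 m H < lam1 m Hr := by
  change Hr = H.release e u at hHr
  subst hHr
  have := hconn.nonempty
  obtain ⟨X, hXpos, hXeig⟩ := H.exists_isPerron (m := m) (by omega) hconn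
  obtain ⟨w, hw, hwmax⟩ := e.exists_max_image X ⟨u, hu⟩
  have hquad := dotProduct_adjMatrix_mulVec_le_release (m := m) (by omega) hlin hlin' hsimple he
    hu hw (fun i => (hXpos i).le) hwmax
  have hnorm : (X ∘ Equiv.swap u w) ⬝ᵥ (X ∘ Equiv.swap u w) = X ⬝ᵥ X :=
    Equiv.sum_comp (Equiv.swap u w) fun i => X i * X i
  have hX0 : X ≠ 0 := fun h => (hXpos w).ne' (congrFun h w)
  refine (Matrix.IsHermitian.le_maxEigenvalue_of_dotProduct_mulVec_le
    (isHermitian_adjMatrix m (H.release e u)) hXeig hX0 hquad hnorm).lt_of_ne fun heq => ?_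
  have hY := Matrix.IsHermitian.mulVec_eq_smul_of_dotProduct_mulVec_le
    (isHermitian_adjMatrix m (H.release e u)) hXeig hquad hnorm heq.symm
  have hpend : ∀ p ∈ e, p ≠ w → H.PendantVertex p := fun p hp hpw =>
    pendantVertex_of_release_mulVec_eq (m := m) (by omega) hunif he hu hw ⟨hXpos, hXeig⟩ hY hp hpw
  have : (e.filter fun v => ¬ H.PendantVertex v).card ≤ 1 :=
    Finset.card_le_one.2 fun a ha b hb => by
      simp only [Finset.mem_filter] at ha hb
      rw [not_imp_comm.1 (hpend a ha.1) ha.2, not_imp_comm.1 (hpend b hb.1) hb.2]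
  omega

open HG in
/-- **Edge releasing increases the spectral radius.**
Let `H` be a connected `m`-uniform linear hypergraph (`m ≥ 3`), `e` a
non-pendant edge of `H` and `u ∈ e`.  The edges adjacent to `e` are exactly
the `f ∈ H.E` with `f ≠ e` and `f ∩ e ≠ ∅` (by linearity each such meets `e`
in a single vertex `v_i`, so `(f \ {v_i}) ∪ {u} = (f \ e) ∪ {u}`).  If the
hypergraph `H^r(e;u)` obtained by replacing every adjacent edge `f` by
`(f \ e) ∪ {u}` is again a simple `m`-uniform linear hypergraph, then
`λ₁(H^r(e;u)) > λ₁(H)`. -/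
theorem edge_releasing_increases_spectral_radius
    (m : ℕ) (hm : 3 ≤ m)
    (H : HG) (hunif : H.Uniform m) (hlin : H.Linear) (hconn : H.Connected)
    (e : Finset H.V) (he : e ∈ H.E)
    (hnonpend : 2 ≤ (e.filter fun v => ¬ H.PendantVertex v).card)
    (u : H.V) (hu : u ∈ e)
    (Hr : HG)
    (hHr : Hr = ⟨H.V, H.fin, H.dec,
      (H.E \ H.E.filter fun f => f ≠ e ∧ (f ∩ e).Nonempty) ∪
        (H.E.filter fun f => f ≠ e ∧ (f ∩ e).Nonempty).image
          fun f => insert u (f \ e)⟩)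
    (hunif' : Hr.Uniform m) (hlin' : Hr.Linear)
    (hsimple : Hr.E.card = H.E.card) :
    lam1 m H < lam1 m Hr :=
  edge_releasing_increases_spectral_radius_general m hm H hunif hlin hconn e he hnonpend u hu Hr hHr
    hlin' hsimple
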